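/- arXiv:2008.02227 — 2 statements merged into one kernel-verified Lean document; each statement's English description precedes it below -/
import Mathlib

section
/- Suppose φ₁, φ₂, φ₃ : ℝ → [0,∞) are one-dimensional Young functions such that φᵢ is incomparable with φⱼ + φₖ for every permutation (i,j,k) of (1,2,3). Then the Young function Φ(x,y) = φ₁(x) + φ₂(y) + φ₃(x-y) is essentially fully anisotropic: there is no invertible linear map T : ℝ² → ℝ² and one-dimensional Young functions ψ₁, ψ₂ with Φ(T(x,y)) ≃ ψ₁(|x|) + ψ₂(|y|). -/
/-!
Suppose `Φ ∘ T ≃ ψ₁(|x|) + ψ₂(|y|)`. Since the `ψᵢ` are monotone in `|·|`, the restriction of the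
right-hand side to a line through a point off the coordinate axes dominates its restriction to any
other line. On the target side, `Φ` restricts to `φⱼ + φₖ` on the lines spanned by `(0,1)`, `(1,0)`
and `(1,1)`, and dominates every `φᵢ` on the line spanned by `(2,1)`. The preimage under `T` of one
of the first three lines misses both coordinate axes, because each coordinate of `T⁻¹` is a nonzero
linear form and such a form vanishes on at most one of them. Following the dominations from that
line to the line `T⁻¹(2,1)` gives `φⱼ + φₖ ≳ φᵢ`, contradicting incomparability.
-/

/-- `F` dominates `G`: there are constants `c, d > 0` with `c * G (d • x) ≤ F x` for all `x`. -/
def Dominates {V : Type*} [SMul ℝ V] (F G : V → ℝ) : Prop :=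
  ∃ c d : ℝ, 0 < c ∧ 0 < d ∧ ∀ x, c * G (d • x) ≤ F x

/-- `F ≃ G`: mutual domination. -/
def FEquiv {V : Type*} [SMul ℝ V] (F G : V → ℝ) : Prop :=
  Dominates F G ∧ Dominates G F

/-- `F` and `G` are incomparable: neither dominates the other. -/
def Incomparable {V : Type*} [SMul ℝ V] (F G : V → ℝ) : Prop :=
  ¬ Dominates F G ∧ ¬ Dominates G F

/-- A one-dimensional Young function: even, convex, nonnegative, vanishing at `0`. -/
def IsYoung1D (φ : ℝ → ℝ) : Prop :=
  (∀ t, φ (-t) = φ t) ∧ ConvexOn ℝ Set.univ φ ∧ φ 0 = 0 ∧ ∀ t, 0 ≤ φ t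

namespace IsYoung1D

variable {φ : ℝ → ℝ}

lemma apply_abs (h : IsYoung1D φ) (x : ℝ) : φ |x| = φ x := by
  rcases abs_cases x with ⟨hx, _⟩ | ⟨hx, _⟩
  · rw [hx]
  · rw [hx, h.1]

lemma apply_mul_le (h : IsYoung1D φ) {l : ℝ} (hl₀ : 0 ≤ l) (hl₁ : l ≤ 1) (s : ℝ) :
    φ (l * s) ≤ φ s := by
  have hconv := h.2.1.2 (Set.mem_univ s) (Set.mem_univ 0) hl₀ (sub_nonneg.2 hl₁) (by ring)
  simp only [smul_eq_mul, mul_zero, add_zero, h.2.2.1] at hconv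
  nlinarith [h.2.2.2 s]

lemma le_of_abs_le (h : IsYoung1D φ) {a b : ℝ} (hab : |a| ≤ |b|) : φ a ≤ φ b := by
  rcases eq_or_ne b 0 with rfl | hb
  · rw [abs_zero, abs_nonpos_iff] at hab
    rw [hab]
  have hb' : 0 < |b| := abs_pos.2 hb
  calc φ a = φ (|a| / |b| * |b|) := by rw [div_mul_cancel₀ _ hb'.ne', h.apply_abs]
    _ ≤ φ |b| := h.apply_mul_le (by positivity) ((div_le_one hb').2 hab) _
    _ = φ b := h.apply_abs b

end IsYoung1D

namespace Dominates

variable {V : Type*} [MulAction ℝ V] {F G H : V → ℝ}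

lemma of_le (h : ∀ x, G x ≤ F x) : Dominates F G :=
  ⟨1, 1, one_pos, one_pos, fun x => by simpa using h x⟩

lemma trans (hFG : Dominates F G) (hGH : Dominates G H) : Dominates F H := by
  obtain ⟨c₁, d₁, hc₁, hd₁, h₁⟩ := hFG
  obtain ⟨c₂, d₂, hc₂, hd₂, h₂⟩ := hGH
  refine ⟨c₁ * c₂, d₂ * d₁, mul_pos hc₁ hc₂, mul_pos hd₂ hd₁, fun x => ?_⟩
  calc c₁ * c₂ * H ((d₂ * d₁) • x) = c₁ * (c₂ * H (d₂ • d₁ • x)) := by rw [mul_smul, mul_assoc]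
    _ ≤ c₁ * G (d₁ • x) := mul_le_mul_of_nonneg_left (h₂ _) hc₁.le
    _ ≤ F x := h₁ x

lemma comp_smul_const (h : Dominates F G) (u : V) :
    Dominates (fun t : ℝ => F (t • u)) (fun t => G (t • u)) := by
  obtain ⟨c, d, hc, hd, hFG⟩ := h
  exact ⟨c, d, hc, hd, fun t => by simpa only [smul_eq_mul, mul_smul] using hFG (t • u)⟩

end Dominates

def orthotropic (ψ₁ ψ₂ : ℝ → ℝ) (z : ℝ × ℝ) : ℝ := ψ₁ |z.1| + ψ₂ |z.2|

lemma dominates_orthotropic_smul {ψ₁ ψ₂ : ℝ → ℝ} (hψ₁ : IsYoung1D ψ₁) (hψ₂ : IsYoung1D ψ₂)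
    {u : ℝ × ℝ} (hu₁ : u.1 ≠ 0) (hu₂ : u.2 ≠ 0) (w : ℝ × ℝ) :
    Dominates (fun t : ℝ => orthotropic ψ₁ ψ₂ (t • u)) (fun t => orthotropic ψ₁ ψ₂ (t • w)) := by
  set d := min |u.1| |u.2| / (|w.1| + |w.2| + 1)
  have hd : 0 < d := by positivity
  have hdw : d * |w.1| ≤ |u.1| ∧ d * |w.2| ≤ |u.2| := by
    have hmin : d * (|w.1| + |w.2| + 1) = min |u.1| |u.2| := div_mul_cancel₀ _ (by positivity)
    constructor <;> nlinarith [min_le_left |u.1| |u.2|, min_le_right |u.1| |u.2|,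
      abs_nonneg w.1, abs_nonneg w.2]
  refine ⟨1, d, one_pos, hd, fun t => ?_⟩
  have key : ∀ {ψ : ℝ → ℝ}, IsYoung1D ψ → ∀ {a b : ℝ}, d * |a| ≤ |b| →
      ψ |d * t * a| ≤ ψ |t * b| := fun hψ a b hab => hψ.le_of_abs_le <| by
    simp only [abs_abs, abs_mul, abs_of_pos hd]
    nlinarith [abs_nonneg t]
  simp only [orthotropic, Prod.smul_fst, Prod.smul_snd, smul_eq_mul, one_mul]
  exact add_le_add (key hψ₁ hdw.1) (key hψ₂ hdw.2)

lemma dominates_smul_of_fequiv_orthotropic {Φ : ℝ × ℝ → ℝ} {T : (ℝ × ℝ) →ₗ[ℝ] (ℝ × ℝ)}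
    {ψ₁ ψ₂ : ℝ → ℝ} (hψ₁ : IsYoung1D ψ₁) (hψ₂ : IsYoung1D ψ₂)
    (hΦ : FEquiv (fun z => Φ (T z)) (orthotropic ψ₁ ψ₂))
    {u v : ℝ × ℝ} (hu : T u = v) (hu₁ : u.1 ≠ 0) (hu₂ : u.2 ≠ 0) {w w' : ℝ × ℝ} (hw : T w = w') :
    Dominates (fun t : ℝ => Φ (t • v)) (fun t => Φ (t • w')) := by
  have h := (hΦ.1.comp_smul_const u).trans
    ((dominates_orthotropic_smul hψ₁ hψ₂ hu₁ hu₂ w).trans (hΦ.2.comp_smul_const w))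
  simpa only [map_smul, hu, hw] using h

lemma exists_coords_ne_zero (L : (ℝ × ℝ) →ₗ[ℝ] (ℝ × ℝ)) (hL : Function.Surjective L) :
    ((L (0, 1)).1 ≠ 0 ∧ (L (0, 1)).2 ≠ 0) ∨ ((L (1, 0)).1 ≠ 0 ∧ (L (1, 0)).2 ≠ 0) ∨
      ((L (1, 1)).1 ≠ 0 ∧ (L (1, 1)).2 ≠ 0) := by
  have hdecomp : ∀ z : ℝ × ℝ, L z = z.1 • L (1, 0) + z.2 • L (0, 1) := fun z => by
    rw [← map_smul, ← map_smul, ← map_add]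
    congr 1
    ext <;> simp
  have hsum : L (1, 1) = L (1, 0) + L (0, 1) := by simpa using hdecomp (1, 1)
  obtain ⟨z₁, hz₁⟩ := hL (1, 0)
  obtain ⟨z₂, hz₂⟩ := hL (0, 1)
  have h₁ := congrArg Prod.fst ((hdecomp z₁).symm.trans hz₁)
  have h₂ := congrArg Prod.snd ((hdecomp z₂).symm.trans hz₂)
  simp only [Prod.fst_add, Prod.snd_add, Prod.smul_fst, Prod.smul_snd, smul_eq_mul] at h₁ h₂
  rw [hsum, Prod.fst_add, Prod.snd_add]
  clear hdecomp hsum hz₁ hz₂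
  grind

def youngTriple (φ : Fin 3 → ℝ → ℝ) (z : ℝ × ℝ) : ℝ := φ 0 z.1 + φ 1 z.2 + φ 2 (z.1 - z.2)

section youngTriple

variable {φ : Fin 3 → ℝ → ℝ}

lemma youngTriple_smul_zero_one (hφ : ∀ i, IsYoung1D (φ i)) (t : ℝ) :
    youngTriple φ (t • (0, 1)) = φ 1 t + φ 2 t := by
  simp [youngTriple, (hφ 0).2.2.1, (hφ 2).1]

lemma youngTriple_smul_one_zero (hφ : ∀ i, IsYoung1D (φ i)) (t : ℝ) :
    youngTriple φ (t • (1, 0)) = φ 0 t + φ 2 t := by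
  simp [youngTriple, (hφ 1).2.2.1]

lemma youngTriple_smul_one_one (hφ : ∀ i, IsYoung1D (φ i)) (t : ℝ) :
    youngTriple φ (t • (1, 1)) = φ 0 t + φ 1 t := by
  simp [youngTriple, (hφ 2).2.2.1]

lemma le_youngTriple_smul_two_one (hφ : ∀ i, IsYoung1D (φ i)) (i : Fin 3) (t : ℝ) :
    φ i t ≤ youngTriple φ (t • (2, 1)) := by
  have h₀ : φ 0 t ≤ φ 0 (t * 2) := (hφ 0).le_of_abs_le <| by
    rw [abs_mul, abs_two]; nlinarith [abs_nonneg t]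
  have : 0 ≤ φ 0 (t * 2) := (hφ 0).2.2.2 _
  have : 0 ≤ φ 1 t := (hφ 1).2.2.2 _
  have : 0 ≤ φ 2 t := (hφ 2).2.2.2 _
  simp only [youngTriple, Prod.smul_mk, smul_eq_mul, mul_one, show t * 2 - t = t by ring]
  fin_cases i <;> dsimp <;> linarith

end youngTriple

theorem essentially_fully_anisotropic (φ : Fin 3 → ℝ → ℝ)
    (hY : ∀ i, IsYoung1D (φ i))
    (hinc : ∀ i j k : Fin 3, i ≠ j → j ≠ k → i ≠ k →
      Incomparable (φ i) (fun t => φ j t + φ k t)) :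
    ¬ ∃ T : (ℝ × ℝ) →ₗ[ℝ] (ℝ × ℝ), Function.Bijective T ∧
      ∃ ψ₁ ψ₂ : ℝ → ℝ, IsYoung1D ψ₁ ∧ IsYoung1D ψ₂ ∧
        FEquiv (fun z : ℝ × ℝ => φ 0 (T z).1 + φ 1 (T z).2 + φ 2 ((T z).1 - (T z).2))
               (fun z : ℝ × ℝ => ψ₁ |z.1| + ψ₂ |z.2|) := by
  rintro ⟨T, hT, ψ₁, ψ₂, hψ₁, hψ₂, hΦ⟩
  let S := LinearEquiv.ofBijective T hT
  have absurd_of_line : ∀ (v : ℝ × ℝ) (i j k : Fin 3), i ≠ j → j ≠ k → i ≠ k →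
      (∀ t, youngTriple φ (t • v) = φ j t + φ k t) →
      (S.symm v).1 ≠ 0 → (S.symm v).2 ≠ 0 → False := by
    intro v i j k hij hjk hik hv hu₁ hu₂
    have hline := dominates_smul_of_fequiv_orthotropic (Φ := youngTriple φ) hψ₁ hψ₂ hΦ
      (S.apply_symm_apply v) hu₁ hu₂ (S.apply_symm_apply (2, 1))
    exact (hinc i j k hij hjk hik).2 <| (Dominates.of_le fun t => (hv t).le).trans <|
      hline.trans <| Dominates.of_le (le_youngTriple_smul_two_one hY i)
  rcases exists_coords_ne_zero S.symm.toLinearMap S.symm.surjective with h | h | h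
  · exact absurd_of_line _ 0 1 2 (by decide) (by decide) (by decide) (youngTriple_smul_zero_one hY) h.1 h.2
  · exact absurd_of_line _ 1 0 2 (by decide) (by decide) (by decide) (youngTriple_smul_one_zero hY) h.1 h.2
  · exact absurd_of_line _ 2 0 1 (by decide) (by decide) (by decide) (youngTriple_smul_one_one hY) h.1 h.2
end

section
/- For any exponents p, q, r > 0 with p ≤ q ≤ r, the function Φ(x,y) = |x|^p + |x-y|^q + |y|^r on ℝ² is equivalent to (x,y) ↦ |x|^p + |y|^r + |x|^q + |y|^q, in the sense that there exist constants c₁, c₂, d₁, d₂ > 0 such that c₁Φ(d₁x, d₁y) ≤ |x|^p + |y|^r + |x|^q + |y|^q ≤ c₂Φ(d₂x, d₂y) for all (x,y). -/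
/-!
Take `d₁ = d₂ = 1` and write `Φ = |x|^p + |x - y|^q + |y|^r`. Since `t ↦ t^q` is monotone and
`(a + b)^q ≤ 2^q (a^q + b^q)`, the term `|x - y|^q` is controlled by `|x|^q + |y|^q`, which gives
`Φ ≤ 2^q (|x|^p + |y|^r + |x|^q + |y|^q)`. Conversely, if `|x| ≤ 1` then `|x|^q ≤ |x|^p`, while if
`|x| ≥ 1` then `|x|^q ≤ 2^q (|x - y|^q + |y|^q)` and `|y|^q ≤ 1 + |y|^r ≤ |x|^p + |y|^r`; either way
`|x|^q ≤ 2^q Φ`, and then `|y|^q ≤ 2^q (|x - y|^q + |x|^q)` is bounded by `Φ` as well.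
-/

open Real

namespace Real

lemma rpow_le_two_rpow_mul_of_le_add {a b c q : ℝ} (ha : 0 ≤ a) (hb : 0 ≤ b) (hc : 0 ≤ c)
    (hcab : c ≤ a + b) (hq : 0 ≤ q) : c ^ q ≤ 2 ^ q * (a ^ q + b ^ q) :=
  calc c ^ q ≤ (2 * max a b) ^ q := by
        gcongr; rw [two_mul]; exact hcab.trans (add_le_add (le_max_left a b) (le_max_right a b))
    _ = 2 ^ q * max (a ^ q) (b ^ q) := by
        rw [mul_rpow zero_le_two (ha.trans (le_max_left a b)), rpow_max ha hb hq]
    _ ≤ 2 ^ q * (a ^ q + b ^ q) := by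
        gcongr; exact max_le_add_of_nonneg (rpow_nonneg ha q) (rpow_nonneg hb q)

lemma rpow_le_one_add_rpow {t q r : ℝ} (ht : 0 ≤ t) (hq : 0 ≤ q) (hqr : q ≤ r) :
    t ^ q ≤ 1 + t ^ r := by
  rcases le_total t 1 with ht1 | ht1
  · linarith [rpow_le_one ht ht1 hq, rpow_nonneg ht r]
  · linarith [rpow_le_rpow_of_exponent_le ht1 hqr]

end Real

section PowerSum

variable {p q r : ℝ}

lemma abs_rpow_le_two_rpow_mul (hp : 0 ≤ p) (hpq : p ≤ q) (hqr : q ≤ r) (x y : ℝ) :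
    |x| ^ q ≤ 2 ^ q * (|x| ^ p + |x - y| ^ q + |y| ^ r) := by
  have hq : 0 ≤ q := hp.trans hpq
  set Φ := |x| ^ p + |x - y| ^ q + |y| ^ r
  have hΦ : 0 ≤ Φ := by positivity
  rcases le_total |x| 1 with hx1 | hx1
  · calc |x| ^ q ≤ |x| ^ p := rpow_le_rpow_of_exponent_ge' (abs_nonneg x) hx1 hp hpq
      _ ≤ Φ := by linarith [rpow_nonneg (abs_nonneg (x - y)) q, rpow_nonneg (abs_nonneg y) r]
      _ ≤ 2 ^ q * Φ := le_mul_of_one_le_left hΦ (one_le_rpow one_le_two hq)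
  · have hy : |y| ^ q ≤ |x| ^ p + |y| ^ r :=
      (rpow_le_one_add_rpow (abs_nonneg y) hq hqr).trans
        (by gcongr; exact one_le_rpow hx1 hp)
    calc |x| ^ q ≤ 2 ^ q * (|x - y| ^ q + |y| ^ q) :=
          rpow_le_two_rpow_mul_of_le_add (abs_nonneg _) (abs_nonneg y) (abs_nonneg x)
            (by linarith [abs_sub_abs_le_abs_sub x y]) hq
      _ ≤ 2 ^ q * Φ := mul_le_mul_of_nonneg_left (by linarith) (by positivity)

lemma rpow_sum_le_mul_rpow_sum (hp : 0 ≤ p) (hpq : p ≤ q) (hqr : q ≤ r) (x y : ℝ) :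
    |x| ^ p + |y| ^ r + |x| ^ q + |y| ^ q ≤
      (1 + 2 ^ q) ^ 2 * (|x| ^ p + |x - y| ^ q + |y| ^ r) := by
  have hq : 0 ≤ q := hp.trans hpq
  set Φ := |x| ^ p + |x - y| ^ q + |y| ^ r
  have hx : |x| ^ q ≤ 2 ^ q * Φ := abs_rpow_le_two_rpow_mul hp hpq hqr x y
  have hxy : |x - y| ^ q ≤ Φ := by
    linarith [rpow_nonneg (abs_nonneg x) p, rpow_nonneg (abs_nonneg y) r]
  have hy : |y| ^ q ≤ 2 ^ q * (|x - y| ^ q + |x| ^ q) :=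
    rpow_le_two_rpow_mul_of_le_add (abs_nonneg _) (abs_nonneg x) (abs_nonneg y)
      (by linarith [abs_sub_abs_le_abs_sub y x, abs_sub_comm x y]) hq
  have hy' : |y| ^ q ≤ 2 ^ q * (Φ + 2 ^ q * Φ) := hy.trans (by gcongr)
  calc |x| ^ p + |y| ^ r + |x| ^ q + |y| ^ q ≤ Φ + 2 ^ q * Φ + 2 ^ q * (Φ + 2 ^ q * Φ) := by
        linarith [rpow_nonneg (abs_nonneg (x - y)) q]
    _ = (1 + 2 ^ q) ^ 2 * Φ := by ring

lemma rpow_sum_le_two_rpow_mul_rpow_sum (hq : 0 ≤ q) (x y : ℝ) :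
    |x| ^ p + |x - y| ^ q + |y| ^ r ≤ 2 ^ q * (|x| ^ p + |y| ^ r + |x| ^ q + |y| ^ q) := by
  have h2q : 1 ≤ (2 : ℝ) ^ q := one_le_rpow one_le_two hq
  have hxy : |x - y| ^ q ≤ 2 ^ q * (|x| ^ q + |y| ^ q) :=
    rpow_le_two_rpow_mul_of_le_add (abs_nonneg x) (abs_nonneg y) (abs_nonneg _) (abs_sub x y) hq
  nlinarith [rpow_nonneg (abs_nonneg x) p, rpow_nonneg (abs_nonneg y) r]

end PowerSum

theorem power_sum_equiv_general (p q r : ℝ) (hp : 0 < p)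
    (hpq : p ≤ q) (hqr : q ≤ r) :
    ∃ c₁ c₂ d₁ d₂ : ℝ, 0 < c₁ ∧ 0 < c₂ ∧ 0 < d₁ ∧ 0 < d₂ ∧
      ∀ x y : ℝ,
        c₁ * (|d₁ * x| ^ p + |d₁ * x - d₁ * y| ^ q + |d₁ * y| ^ r) ≤
            |x| ^ p + |y| ^ r + |x| ^ q + |y| ^ q ∧
        |x| ^ p + |y| ^ r + |x| ^ q + |y| ^ q ≤
            c₂ * (|d₂ * x| ^ p + |d₂ * x - d₂ * y| ^ q + |d₂ * y| ^ r) := by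
  have h2q : (0 : ℝ) < 2 ^ q := rpow_pos_of_pos two_pos q
  refine ⟨(2 ^ q)⁻¹, (1 + 2 ^ q) ^ 2, 1, 1, inv_pos.2 h2q, by positivity, one_pos, one_pos,
    fun x y => ?_⟩
  simp only [one_mul]
  exact ⟨(inv_mul_le_iff₀ h2q).2 (rpow_sum_le_two_rpow_mul_rpow_sum (hp.le.trans hpq) x y),
    rpow_sum_le_mul_rpow_sum hp.le hpq hqr x y⟩

theorem power_sum_equiv (p q r : ℝ) (hp : 0 < p) (hq : 0 < q) (hr : 0 < r)
    (hpq : p ≤ q) (hqr : q ≤ r) :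
    ∃ c₁ c₂ d₁ d₂ : ℝ, 0 < c₁ ∧ 0 < c₂ ∧ 0 < d₁ ∧ 0 < d₂ ∧
      ∀ x y : ℝ,
        c₁ * (|d₁ * x| ^ p + |d₁ * x - d₁ * y| ^ q + |d₁ * y| ^ r) ≤
            |x| ^ p + |y| ^ r + |x| ^ q + |y| ^ q ∧
        |x| ^ p + |y| ^ r + |x| ^ q + |y| ^ q ≤
            c₂ * (|d₂ * x| ^ p + |d₂ * x - d₂ * y| ^ q + |d₂ * y| ^ r) :=
  power_sum_equiv_general p q r hp hpq hqr
end
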